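/- arXiv:1910.10829 — 2 statements merged into one kernel-verified Lean document; each statement's English description precedes it below -/
import Mathlib

section
/- For every (x*, s) ∈ X* × ℝ the following are equivalent: (i) every x ∈ X satisfying A_u(x) − ω_u ∈ −S for all u ∈ 𝒰 also satisfies ⟨x*, x⟩ ≥ s; (ii) (x*, s) ∈ −oco[ {(λ∘A_u, λ(ω_u)) : (u,λ) ∈ 𝒰×S⁺} + ℝ₊(0_{X*},1) ], where oco denotes the closed convex hull in X* × ℝ (weak*-topology on X* times the usual topology on ℝ) and ℝ₊(0_{X*},1) := {(0,μ) : μ ≥ 0}. -/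
/-! By the bipolar theorem for the closed convex cone `S`, the constraint `A_u x - ω_u ∈ -S` is
equivalent to the scalar inequalities `⟨λ ∘ A_u, x⟩ ≤ λ(ω_u)` for `λ ∈ S⁺`, so the feasible set is
the solution set of the linear system indexed by the robust moment cone `M`. The theorem is then
Farkas' lemma for a consistent linear system: if `(x*, s) ∉ -cl co M`, separate `-(x*, s)` from the
closed convex cone `cl co M`. Continuous functionals on the weak* dual are evaluations, so the
separating functional is `(p, t) ↦ p x₀ + c t` with `c ≥ 0`; then `-x₀ / c` (if `c > 0`) or a point
`x̄ - t x₀` far out on a feasible ray (if `c = 0`) is a feasible point with `⟨x*, x⟩ < s`. -/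

open Pointwise

section ClosedConvexCone

variable {E : Type*} [AddCommGroup E] [Module ℝ E] [TopologicalSpace E] {S : Set E}

def ProperCone.ofConvex (hne : S.Nonempty) (hconv : Convex ℝ S)
    (hcone : ∀ r : ℝ, 0 ≤ r → ∀ z ∈ S, r • z ∈ S) (hclosed : IsClosed S) : ProperCone ℝ E where
  carrier := S
  add_mem' {a b} ha hb := by
    have hmid := hconv ha hb (by norm_num : (0 : ℝ) ≤ 1 / 2) (by norm_num : (0 : ℝ) ≤ 1 / 2)
      (by norm_num)
    simpa [smul_add, smul_smul] using hcone 2 zero_le_two _ hmid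
  zero_mem' := by
    obtain ⟨z, hz⟩ := hne
    simpa using hcone 0 le_rfl z hz
  smul_mem' c _ hx := hcone c c.2 _ hx
  isClosed' := hclosed

theorem smul_mem_closure_convexHull [ContinuousConstSMul ℝ E] {G : Set E}
    (hG : ∀ r : ℝ, 0 ≤ r → ∀ q ∈ G, r • q ∈ G) {r : ℝ} (hr : 0 ≤ r) {q : E} (hq : q ∈ closure (convexHull ℝ G)) :
    r • q ∈ closure (convexHull ℝ G) := by
  refine map_mem_closure (continuous_const_smul r) hq fun y hy ↦ ?_
  have hrG : r • G ⊆ G := by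
    rintro _ ⟨z, hz, rfl⟩
    exact hG r hr z hz
  exact convexHull_mono hrG (by rw [convexHull_smul]; exact Set.smul_mem_smul_set hy)

variable [IsTopologicalAddGroup E] [ContinuousSMul ℝ E] [LocallyConvexSpace ℝ E]

theorem exists_dual_nonneg_of_notMem (hne : S.Nonempty) (hconv : Convex ℝ S)
    (hcone : ∀ r : ℝ, 0 ≤ r → ∀ z ∈ S, r • z ∈ S) (hclosed : IsClosed S) {x : E} (hx : x ∉ S) :
    ∃ f : StrongDual ℝ E, (∀ y ∈ S, 0 ≤ f y) ∧ f x < 0 :=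
  (ProperCone.ofConvex hne hconv hcone hclosed).hyperplane_separation_point hx

theorem mem_iff_forall_dual_nonneg (hne : S.Nonempty) (hconv : Convex ℝ S)
    (hcone : ∀ r : ℝ, 0 ≤ r → ∀ z ∈ S, r • z ∈ S) (hclosed : IsClosed S) {x : E} :
    x ∈ S ↔ ∀ f : StrongDual ℝ E, (∀ y ∈ S, 0 ≤ f y) → 0 ≤ f x := by
  refine ⟨fun hx f hf ↦ hf x hx, fun h ↦ ?_⟩
  by_contra hx
  obtain ⟨f, hf, hfx⟩ := exists_dual_nonneg_of_notMem hne hconv hcone hclosed hx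
  exact (h f hf).not_gt hfx

end ClosedConvexCone

instance WeakDual.instLocallyConvexSpace {X : Type*} [AddCommGroup X] [Module ℝ X]
    [TopologicalSpace X] : LocallyConvexSpace ℝ (WeakDual ℝ X) :=
  WeakBilin.locallyConvexSpace

section LinearSystem

variable {X : Type*} [AddCommGroup X] [Module ℝ X] [TopologicalSpace X]

def solutionSet (G : Set (WeakDual ℝ X × ℝ)) : Set X := {x | ∀ q ∈ G, q.1 x ≤ q.2}

theorem exists_eval_add_mul_eq (f : StrongDual ℝ (WeakDual ℝ X × ℝ)) :
    ∃ x₀ : X, ∃ c : ℝ, ∀ p t, f (p, t) = p x₀ + c * t := by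
  obtain ⟨x₀, hx₀⟩ :=
    LinearMap.dualEmbedding_surjective (topDualPairing ℝ X) (f.comp (.inl ℝ _ ℝ))
  refine ⟨x₀, f (0, 1), fun p t ↦ ?_⟩
  have hsplit : ((p, t) : WeakDual ℝ X × ℝ) = (p, 0) + t • (0, 1) := by simp
  rw [hsplit, map_add, map_smul, smul_eq_mul, mul_comm]
  congr 1
  exact (DFunLike.congr_fun hx₀ p).symm

theorem le_of_mem_solutionSet_of_mem_neg_closure_convexHull {G : Set (WeakDual ℝ X × ℝ)}
    {x : X} (hx : x ∈ solutionSet G) {xs : WeakDual ℝ X} {s : ℝ}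
    (h : (xs, s) ∈ -closure (convexHull ℝ G)) : s ≤ xs x := by
  let H : Set (WeakDual ℝ X × ℝ) := {q | q.1 x ≤ q.2}
  have hH_closed : IsClosed H :=
    isClosed_le ((WeakDual.eval_continuous x).comp continuous_fst) continuous_snd
  have hH_convex : Convex ℝ H := by
    intro a ha b hb α β hα hβ _
    show α * a.1 x + β * b.1 x ≤ α * a.2 + β * b.2
    gcongr
    exacts [ha, hb]
  have hGH : closure (convexHull ℝ G) ⊆ H :=
    closure_minimal (convexHull_min (fun q hq ↦ hx q hq) hH_convex) hH_closed
  have : -(xs x) ≤ -s := hGH h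
  linarith

theorem exists_mem_solutionSet_lt {G : Set (WeakDual ℝ X × ℝ)} (hcons : (solutionSet G).Nonempty)
    {x₀ : X} {c : ℝ} (hc : 0 ≤ c) (hG : ∀ q ∈ G, 0 ≤ q.1 x₀ + c * q.2)
    {xs : WeakDual ℝ X} {s : ℝ} (hxs : 0 < xs x₀ + c * s) : ∃ x ∈ solutionSet G, xs x < s := by
  rcases hc.lt_or_eq with hc | rfl
  · refine ⟨-c⁻¹ • x₀, fun q hq ↦ ?_, ?_⟩
    · have := hG q hq
      rw [map_smul, smul_eq_mul, neg_mul, ← mul_neg, inv_mul_le_iff₀ hc]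
      linarith
    · rw [map_smul, smul_eq_mul, neg_mul, ← mul_neg, inv_mul_lt_iff₀ hc]
      linarith
  · obtain ⟨xh, hxh⟩ := hcons
    simp only [zero_mul, add_zero] at hG hxs
    set t := (|xs xh - s| + 1) / xs x₀
    have ht : 0 ≤ t := by positivity
    refine ⟨xh - t • x₀, fun q hq ↦ ?_, ?_⟩
    · rw [map_sub, map_smul, smul_eq_mul]
      linarith [hxh q hq, mul_nonneg ht (hG q hq)]
    · have htx : t * xs x₀ = |xs xh - s| + 1 := div_mul_cancel₀ _ hxs.ne'
      rw [map_sub, map_smul, smul_eq_mul, htx]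
      linarith [le_abs_self (xs xh - s)]

variable {G : Set (WeakDual ℝ X × ℝ)}

theorem mem_neg_closure_convexHull_of_forall_le (hG : ∀ r : ℝ, 0 ≤ r → ∀ q ∈ G, r • q ∈ G)
    (h01 : ((0 : WeakDual ℝ X), (1 : ℝ)) ∈ G) (hcons : (solutionSet G).Nonempty)
    {xs : WeakDual ℝ X} {s : ℝ} (h : ∀ x ∈ solutionSet G, s ≤ xs x) :
    (xs, s) ∈ -closure (convexHull ℝ G) := by
  by_contra hnot
  have hGC : G ⊆ closure (convexHull ℝ G) := (subset_convexHull ℝ G).trans subset_closure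
  obtain ⟨f, hfC, hf⟩ := exists_dual_nonneg_of_notMem ⟨_, hGC h01⟩
    (convex_convexHull ℝ G).closure (fun r hr q hq ↦ smul_mem_closure_convexHull hG hr hq)
    isClosed_closure hnot
  obtain ⟨x₀, c, hfx₀⟩ := exists_eval_add_mul_eq f
  have hG' : ∀ q ∈ G, 0 ≤ q.1 x₀ + c * q.2 := fun q hq ↦ hfx₀ q.1 q.2 ▸ hfC q (hGC hq)
  have hc : 0 ≤ c := by
    have := hG' _ h01
    change 0 ≤ 0 + c * 1 at this
    linarith
  have hxs : 0 < xs x₀ + c * s := by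
    have := hfx₀ (-xs) (-s) ▸ hf
    change -(xs x₀) + c * -s < 0 at this
    linarith
  obtain ⟨x, hx, hlt⟩ := exists_mem_solutionSet_lt hcons hc hG' hxs
  exact (h x hx).not_gt hlt

theorem forall_mem_solutionSet_le_iff (hG : ∀ r : ℝ, 0 ≤ r → ∀ q ∈ G, r • q ∈ G)
    (h01 : ((0 : WeakDual ℝ X), (1 : ℝ)) ∈ G) (hcons : (solutionSet G).Nonempty)
    (xs : WeakDual ℝ X) (s : ℝ) :
    (∀ x ∈ solutionSet G, s ≤ xs x) ↔ (xs, s) ∈ -closure (convexHull ℝ G) :=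
  ⟨mem_neg_closure_convexHull_of_forall_le hG h01 hcons,
    fun h _ hx ↦ le_of_mem_solutionSet_of_mem_neg_closure_convexHull hx h⟩

end LinearSystem

section Robust

variable {X Z ι : Type*} [AddCommGroup X] [Module ℝ X] [TopologicalSpace X]
  [AddCommGroup Z] [Module ℝ Z] [TopologicalSpace Z] {S : Set Z} {A : ι → X →L[ℝ] Z} {ω : ι → Z}

def robustMomentCone (S : Set Z) (A : ι → X →L[ℝ] Z) (ω : ι → Z) : Set (WeakDual ℝ X × ℝ) :=
  {q | ∃ u : ι, ∃ l : WeakDual ℝ Z,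
    (∀ z ∈ S, 0 ≤ l z) ∧ (∀ x : X, q.1 x = l (A u x)) ∧ q.2 = l (ω u)} +
  {q | q.1 = 0 ∧ 0 ≤ q.2}

theorem mem_robustMomentCone {q : WeakDual ℝ X × ℝ} :
    q ∈ robustMomentCone S A ω ↔ ∃ u : ι, ∃ l : WeakDual ℝ Z, (∀ z ∈ S, 0 ≤ l z) ∧
      ∃ μ : ℝ, 0 ≤ μ ∧ (∀ x : X, q.1 x = l (A u x)) ∧ q.2 = l (ω u) + μ := by
  constructor
  · rintro ⟨a, ⟨u, l, hl, ha₁, ha₂⟩, b, ⟨hb₁, hb₂⟩, rfl⟩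
    refine ⟨u, l, hl, b.2, hb₂, fun x ↦ ?_, by simp [ha₂]⟩
    simp [hb₁, ha₁]
  · rintro ⟨u, l, hl, μ, hμ, hq₁, hq₂⟩
    refine ⟨(q.1, l (ω u)), ⟨u, l, hl, hq₁, rfl⟩, (0, μ), ⟨rfl, hμ⟩, ?_⟩
    ext <;> simp [hq₂]

theorem smul_mem_robustMomentCone {r : ℝ} (hr : 0 ≤ r) {q : WeakDual ℝ X × ℝ}
    (hq : q ∈ robustMomentCone S A ω) : r • q ∈ robustMomentCone S A ω := by
  obtain ⟨u, l, hl, μ, hμ, hq₁, hq₂⟩ := mem_robustMomentCone.1 hq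
  refine mem_robustMomentCone.2 ⟨u, r • l, fun z hz ↦ mul_nonneg hr (hl z hz), r * μ,
    mul_nonneg hr hμ, fun x ↦ ?_, ?_⟩
  · change r * q.1 x = r * l (A u x)
    rw [hq₁]
  · change r * q.2 = r * l (ω u) + r * μ
    rw [hq₂, mul_add]

theorem zero_one_mem_robustMomentCone [Nonempty ι] :
    ((0 : WeakDual ℝ X), (1 : ℝ)) ∈ robustMomentCone S A ω :=
  mem_robustMomentCone.2 ⟨Classical.arbitrary ι, 0, fun _ _ ↦ le_rfl, 1, zero_le_one,
    fun _ ↦ rfl, (zero_add 1).symm⟩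

theorem solutionSet_robustMomentCone [IsTopologicalAddGroup Z] [ContinuousSMul ℝ Z]
    [LocallyConvexSpace ℝ Z] (hne : S.Nonempty) (hconv : Convex ℝ S)
    (hcone : ∀ r : ℝ, 0 ≤ r → ∀ z ∈ S, r • z ∈ S) (hclosed : IsClosed S) :
    solutionSet (robustMomentCone S A ω) = {x | ∀ u, A u x - ω u ∈ -S} := by
  ext x
  constructor
  · intro hx u
    rw [Set.mem_neg, neg_sub, mem_iff_forall_dual_nonneg hne hconv hcone hclosed]
    intro f hf
    have := hx (StrongDual.toWeakDual (f.comp (A u)), f (ω u)) <| mem_robustMomentCone.2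
      ⟨u, StrongDual.toWeakDual f, hf, 0, le_rfl, fun _ ↦ rfl, (add_zero _).symm⟩
    change f (A u x) ≤ f (ω u) at this
    rw [map_sub]
    linarith
  · intro hx q hq
    obtain ⟨u, l, hl, μ, hμ, hq₁, hq₂⟩ := mem_robustMomentCone.1 hq
    have hlx := hl _ (by simpa using hx u : ω u - A u x ∈ S)
    rw [hq₁, hq₂]
    rw [map_sub] at hlx
    linarith

end Robust

theorem stmt1_general
    {X Z : Type*}
    [AddCommGroup X] [Module ℝ X] [TopologicalSpace X]
    [AddCommGroup Z] [Module ℝ Z] [TopologicalSpace Z] [IsTopologicalAddGroup Z]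
    [ContinuousSMul ℝ Z] [LocallyConvexSpace ℝ Z]
    (S : Set Z) (hS_ne : S.Nonempty) (hS_closed : IsClosed S) (hS_conv : Convex ℝ S)
    (hS_cone : ∀ r : ℝ, 0 ≤ r → ∀ z ∈ S, r • z ∈ S)
    {ι : Type*} [Nonempty ι] (A : ι → X →L[ℝ] Z) (ω : ι → Z)
    (hF : {x : X | ∀ u : ι, A u x - ω u ∈ -S}.Nonempty)
    (xs : WeakDual ℝ X) (s : ℝ) :
    (∀ x : X, (∀ u : ι, A u x - ω u ∈ -S) → s ≤ xs x) ↔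
      (xs, s) ∈ -closure (convexHull ℝ
        ({q : WeakDual ℝ X × ℝ | ∃ u : ι, ∃ l : WeakDual ℝ Z,
            (∀ z ∈ S, 0 ≤ l z) ∧ (∀ x : X, q.1 x = l (A u x)) ∧ q.2 = l (ω u)} +
          {q : WeakDual ℝ X × ℝ | q.1 = 0 ∧ 0 ≤ q.2})) := by
  have hsol := solutionSet_robustMomentCone (A := A) (ω := ω) hS_ne hS_conv hS_cone hS_closed
  have := forall_mem_solutionSet_le_iff (fun _ hr _ ↦ smul_mem_robustMomentCone hr)
    zero_one_mem_robustMomentCone (hsol ▸ hF) xs s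
  rw [hsol] at this
  exact this

/-- Robust Farkas-type result for affine conical systems with uncertainty
(Corollary 2.1 / `lem_FL2`). -/
theorem stmt1
    {X Z : Type*}
    [AddCommGroup X] [Module ℝ X] [TopologicalSpace X] [IsTopologicalAddGroup X]
    [ContinuousSMul ℝ X] [LocallyConvexSpace ℝ X] [T2Space X]
    [AddCommGroup Z] [Module ℝ Z] [TopologicalSpace Z] [IsTopologicalAddGroup Z]
    [ContinuousSMul ℝ Z] [LocallyConvexSpace ℝ Z] [T2Space Z]
    (S : Set Z) (hS_ne : S.Nonempty) (hS_closed : IsClosed S) (hS_conv : Convex ℝ S)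
    (hS_cone : ∀ r : ℝ, 0 ≤ r → ∀ z ∈ S, r • z ∈ S)
    {ι : Type*} [Nonempty ι] (A : ι → X →L[ℝ] Z) (ω : ι → Z)
    (hF : {x : X | ∀ u : ι, A u x - ω u ∈ -S}.Nonempty)
    (xs : WeakDual ℝ X) (s : ℝ) :
    (∀ x : X, (∀ u : ι, A u x - ω u ∈ -S) → s ≤ xs x) ↔
      (xs, s) ∈ -closure (convexHull ℝ
        ({q : WeakDual ℝ X × ℝ | ∃ u : ι, ∃ l : WeakDual ℝ Z,
            (∀ z ∈ S, 0 ≤ l z) ∧ (∀ x : X, q.1 x = l (A u x)) ∧ q.2 = l (ω u)} +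
          {q : WeakDual ℝ X × ℝ | q.1 = 0 ∧ 0 ≤ q.2})) :=
  stmt1_general S hS_ne hS_closed hS_conv hS_cone A ω hF xs s
end

section
/- Assume int S ≠ ∅ and that the collection (u ↦ G_u(x))_{x∈X} is uniformly S⁺-concave, i.e. for all u₁, u₂ ∈ 𝒰 and λ₁, λ₂ ∈ S⁺ there exist ū ∈ 𝒰 and λ̄ ∈ S⁺ such that λ₁(G_{u₁}(x)) + λ₂(G_{u₂}(x)) ≤ λ̄(G_ū(x)) for all x ∈ X. Then the robust moment cone 𝓜₀ is a convex subset of X*×ℝ. -/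
/-!
A convex combination `a • (x₁*, r₁) + b • (x₂*, r₂)` of points of `epi (λ₁G_{u₁})*` and
`epi (λ₂G_{u₂})*` lies in the epigraph of the conjugate of `a λ₁G_{u₁} + b λ₂G_{u₂}`, since the
conjugate of a sum is at most the sum of the conjugates. Uniform `S⁺`-concavity, applied to the
multipliers `a λ₁, b λ₂ ∈ S⁺`, dominates this function by some `λ̄ G_ū`, and conjugation reverses
the order, so the point lies in `epi (λ̄ G_ū)* ⊆ 𝓜₀`.
-/

section ConjugateEpigraph

variable {X : Type*} [AddCommGroup X] [Module ℝ X] [TopologicalSpace X]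

/-- The epigraph `epi φ*` of the Fenchel conjugate of `φ`, as a subset of `X* × ℝ`. -/
def conjugateEpigraph (φ : X → ℝ) : Set (WeakDual ℝ X × ℝ) :=
  {q | ∀ x, q.1 x - φ x ≤ q.2}

theorem conjugateEpigraph_mono {φ ψ : X → ℝ} (h : φ ≤ ψ) :
    conjugateEpigraph φ ⊆ conjugateEpigraph ψ :=
  fun _ hq x => (sub_le_sub_left (h x) _).trans (hq x)

theorem smul_add_smul_mem_conjugateEpigraph {φ ψ : X → ℝ} {p q : WeakDual ℝ X × ℝ}
    (hp : p ∈ conjugateEpigraph φ) (hq : q ∈ conjugateEpigraph ψ) {a b : ℝ}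
    (ha : 0 ≤ a) (hb : 0 ≤ b) :
    a • p + b • q ∈ conjugateEpigraph (a • φ + b • ψ) := by
  intro x
  have hpx := mul_le_mul_of_nonneg_left (hp x) ha
  have hqx := mul_le_mul_of_nonneg_left (hq x) hb
  change a * p.1 x + b * q.1 x - (a * φ x + b * ψ x) ≤ a * p.2 + b * q.2
  linarith

theorem convex_biUnion_conjugateEpigraph {ι : Type*} {I : Set ι} {φ : ι → X → ℝ}
    (h : ∀ i ∈ I, ∀ j ∈ I, ∀ a b : ℝ, 0 ≤ a → 0 ≤ b → a + b = 1 →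
      ∃ k ∈ I, a • φ i + b • φ j ≤ φ k) :
    Convex ℝ (⋃ i ∈ I, conjugateEpigraph (φ i)) := by
  rintro p hp q hq a b ha hb hab
  simp only [Set.mem_iUnion] at hp hq ⊢
  obtain ⟨i, hi, hp⟩ := hp
  obtain ⟨j, hj, hq⟩ := hq
  obtain ⟨k, hk, hle⟩ := h i hi j hj a b ha hb hab
  exact ⟨k, hk, conjugateEpigraph_mono hle (smul_add_smul_mem_conjugateEpigraph hp hq ha hb)⟩

end ConjugateEpigraph

theorem stmt4_general
    {X Z W : Type*}
    [AddCommGroup X] [Module ℝ X] [TopologicalSpace X]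
    [AddCommGroup Z] [Module ℝ Z] [TopologicalSpace Z]
    (S : Set Z)
    (U : Set W) (G : W → X → Z)
    (hconc : ∀ u₁ ∈ U, ∀ u₂ ∈ U, ∀ l₁ l₂ : WeakDual ℝ Z,
      (∀ z ∈ S, 0 ≤ l₁ z) → (∀ z ∈ S, 0 ≤ l₂ z) →
      ∃ u₃ ∈ U, ∃ l₃ : WeakDual ℝ Z, (∀ z ∈ S, 0 ≤ l₃ z) ∧
        ∀ x : X, l₁ (G u₁ x) + l₂ (G u₂ x) ≤ l₃ (G u₃ x)) :
    Convex ℝ (⋃ u ∈ U, ⋃ l ∈ {l : WeakDual ℝ Z | ∀ z ∈ S, 0 ≤ l z},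
      {q : WeakDual ℝ X × ℝ | ∀ x : X, q.1 x - l (G u x) ≤ q.2}) := by
  set dualCone := {l : WeakDual ℝ Z | ∀ z ∈ S, 0 ≤ l z}
  have hunion : (⋃ u ∈ U, ⋃ l ∈ dualCone,
      {q : WeakDual ℝ X × ℝ | ∀ x : X, q.1 x - l (G u x) ≤ q.2}) =
      ⋃ ul ∈ U ×ˢ dualCone, conjugateEpigraph fun x => ul.2 (G ul.1 x) := by
    ext q
    simp [conjugateEpigraph, and_assoc]
  rw [hunion]
  refine convex_biUnion_conjugateEpigraph ?_
  rintro ⟨u₁, l₁⟩ ⟨hu₁, hl₁⟩ ⟨u₂, l₂⟩ ⟨hu₂, hl₂⟩ a b ha hb -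
  obtain ⟨u₃, hu₃, l₃, hl₃, hle⟩ := hconc u₁ hu₁ u₂ hu₂ (a • l₁) (b • l₂)
    (fun z hz => mul_nonneg ha (hl₁ z hz)) (fun z hz => mul_nonneg hb (hl₂ z hz))
  exact ⟨(u₃, l₃), ⟨hu₃, hl₃⟩, hle⟩

/-- Proposition 2.2(i): if int S ≠ ∅ and the collection (u ↦ G_u(x))_{x∈X} is uniformly
S⁺-concave, then the robust moment cone 𝓜₀ is convex. -/
theorem stmt4
    {X Z W : Type*}
    [AddCommGroup X] [Module ℝ X] [TopologicalSpace X] [IsTopologicalAddGroup X]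
    [ContinuousSMul ℝ X] [LocallyConvexSpace ℝ X] [T2Space X]
    [AddCommGroup Z] [Module ℝ Z] [TopologicalSpace Z] [IsTopologicalAddGroup Z]
    [ContinuousSMul ℝ Z] [LocallyConvexSpace ℝ Z] [T2Space Z]
    [AddCommGroup W] [Module ℝ W] [TopologicalSpace W] [IsTopologicalAddGroup W]
    [ContinuousSMul ℝ W]
    (S : Set Z) (hS_ne : S.Nonempty) (hS_closed : IsClosed S) (hS_conv : Convex ℝ S)
    (hS_cone : ∀ r : ℝ, 0 ≤ r → ∀ z ∈ S, r • z ∈ S)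
    (hS_int : (interior S).Nonempty)
    (U : Set W) (hU : U.Nonempty) (G : W → X → Z)
    (hG_conv : ∀ u ∈ U, Convex ℝ {p : X × Z | p.2 - G u p.1 ∈ S})
    (hG_closed : ∀ u ∈ U, IsClosed {p : X × Z | p.2 - G u p.1 ∈ S})
    (hconc : ∀ u₁ ∈ U, ∀ u₂ ∈ U, ∀ l₁ l₂ : WeakDual ℝ Z,
      (∀ z ∈ S, 0 ≤ l₁ z) → (∀ z ∈ S, 0 ≤ l₂ z) →
      ∃ u₃ ∈ U, ∃ l₃ : WeakDual ℝ Z, (∀ z ∈ S, 0 ≤ l₃ z) ∧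
        ∀ x : X, l₁ (G u₁ x) + l₂ (G u₂ x) ≤ l₃ (G u₃ x)) :
    Convex ℝ (⋃ u ∈ U, ⋃ l ∈ {l : WeakDual ℝ Z | ∀ z ∈ S, 0 ≤ l z},
      {q : WeakDual ℝ X × ℝ | ∀ x : X, q.1 x - l (G u x) ≤ q.2}) :=
  stmt4_general S U G hconc
end
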